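/- arXiv:1710.03989 — 4 statements merged into one kernel-verified Lean document; each statement's English description precedes it below -/
import Mathlib

section
/- Let X be a real Banach space, let F : X → ℝ be locally Lipschitz at x̄ ∈ X, let u, v ∈ X, let {t_k} be a sequence of positive reals converging to 0 and {v^k} a sequence in X converging to v. Then limsup_{k → ∞} [F(x̄ + t_k u + ½ t_k² v^k) − F(x̄) − t_k F°(x̄, u)]/(½ t_k²) ≤ F°(x̄, v) + F°°(x̄, u), the inequality being understood in the extended reals. -/
open Filter Topology Set

/-- `F` is locally Lipschitz at `xbar`: Lipschitz on some neighborhood of `xbar`. -/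
def LocallyLipschitzAt {X : Type*} [NormedAddCommGroup X] (F : X → ℝ) (xbar : X) : Prop :=
  ∃ L : ℝ, 0 ≤ L ∧ ∃ U ∈ 𝓝 xbar, ∀ x ∈ U, ∀ y ∈ U, |F x - F y| ≤ L * ‖x - y‖

/-- The Clarke generalized directional derivative
`F°(xbar, u) = limsup_{x → xbar, t ↓ 0} (F(x + t u) - F x) / t`. -/
noncomputable def clarkeD {X : Type*} [NormedAddCommGroup X] [NormedSpace ℝ X]
    (F : X → ℝ) (xbar u : X) : ℝ :=
  Filter.limsup (fun p : X × ℝ => (F (p.1 + p.2 • u) - F p.1) / p.2)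
    ((𝓝 xbar) ×ˢ (𝓝[>] (0:ℝ)))

/-- The second-order upper generalized directional derivative
`F°°(xbar, u) = limsup_{t ↓ 0} (F(xbar + t u) - F xbar - t F°(xbar, u)) / (t²/2)`,
a value in the extended reals. -/
noncomputable def clarkeD2 {X : Type*} [NormedAddCommGroup X] [NormedSpace ℝ X]
    (F : X → ℝ) (xbar u : X) : EReal :=
  Filter.limsup
    (fun t : ℝ =>
      (((F (xbar + t • u) - F xbar - t * clarkeD F xbar u) / (t ^ 2 / 2) : ℝ) : EReal))
    (𝓝[>] (0:ℝ))

/-!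
Put `yₖ = xbar + tₖ u → xbar` and `sₖ = tₖ² / 2 ↓ 0`. The quotient splits as the first-order
quotient `(F (yₖ + sₖ vₖ) - F yₖ) / sₖ` plus the quotient defining `F°°(xbar, u)` taken along `tₖ`.
By the Lipschitz bound, replacing `vₖ` by `v` in the first term costs at most `L ‖vₖ - v‖ → 0`,
and with `v` in place of `vₖ` it is a Clarke difference quotient along `(yₖ, sₖ) → (xbar, 0⁺)`,
so its limsup is at most `F°(xbar, v)`.
-/

namespace LocallyLipschitzAt

variable {X : Type*} [NormedAddCommGroup X] {F : X → ℝ} {xbar : X}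

theorem exists_eventually_abs_sub_le (hF : LocallyLipschitzAt F xbar) :
    ∃ L : ℝ, ∀ᶠ p : X × X in 𝓝 (xbar, xbar), |F p.1 - F p.2| ≤ L * ‖p.1 - p.2‖ := by
  obtain ⟨L, -, U, hU, hlip⟩ := hF
  exact ⟨L, eventually_of_mem (prod_mem_nhds hU hU) fun p hp => hlip _ hp.1 _ hp.2⟩

variable [NormedSpace ℝ X]

theorem exists_eventually_abs_diffQuot_sub_le (hF : LocallyLipschitzAt F xbar) {ι : Type*}
    {l : Filter ι} {y w w' : ι → X} {s : ι → ℝ} {a b : X} (hy : Tendsto y l (𝓝 xbar))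
    (hs : Tendsto s l (𝓝[>] 0)) (hw : Tendsto w l (𝓝 a)) (hw' : Tendsto w' l (𝓝 b)) :
    ∃ L : ℝ, ∀ᶠ i in l,
      |(F (y i + s i • w i) - F (y i + s i • w' i)) / s i| ≤ L * ‖w i - w' i‖ := by
  obtain ⟨L, hL⟩ := hF.exists_eventually_abs_sub_le
  obtain ⟨hs0, hs_pos⟩ := tendsto_nhdsWithin_iff.1 hs
  have hpair : Tendsto (fun i => (y i + s i • w i, y i + s i • w' i)) l (𝓝 (xbar, xbar)) := by
    simpa using (hy.add (hs0.smul hw)).prodMk_nhds (hy.add (hs0.smul hw'))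
  refine ⟨L, ?_⟩
  filter_upwards [hpair.eventually hL, hs_pos] with i hi (hpos : 0 < s i)
  have hsub : y i + s i • w i - (y i + s i • w' i) = s i • (w i - w' i) := by
    rw [smul_sub]; abel
  rw [hsub, norm_smul, Real.norm_of_nonneg hpos.le] at hi
  rw [abs_div, abs_of_pos hpos, div_le_iff₀ hpos]
  linarith

theorem tendsto_diffQuot_sub_diffQuot (hF : LocallyLipschitzAt F xbar) {ι : Type*}
    {l : Filter ι} {y w : ι → X} {s : ι → ℝ} {v : X} (hy : Tendsto y l (𝓝 xbar))
    (hs : Tendsto s l (𝓝[>] 0)) (hw : Tendsto w l (𝓝 v)) :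
    Tendsto (fun i => (F (y i + s i • w i) - F (y i + s i • v)) / s i) l (𝓝 0) := by
  obtain ⟨L, hL⟩ := hF.exists_eventually_abs_diffQuot_sub_le hy hs hw tendsto_const_nhds
  refine squeeze_zero_norm' hL ?_
  simpa using tendsto_const_nhds.mul (hw.sub_const v).norm

theorem coe_clarkeD_eq_limsup (hF : LocallyLipschitzAt F xbar) (v : X) :
    (clarkeD F xbar v : EReal) =
      limsup (fun p : X × ℝ => (((F (p.1 + p.2 • v) - F p.1) / p.2 : ℝ) : EReal))
        (𝓝 xbar ×ˢ 𝓝[>] 0) := by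
  obtain ⟨L, hL⟩ := hF.exists_eventually_abs_diffQuot_sub_le (l := 𝓝 xbar ×ˢ 𝓝[>] 0)
    (w := fun _ => v) (w' := fun _ => 0) tendsto_fst tendsto_snd tendsto_const_nhds
    tendsto_const_nhds
  simp only [smul_zero, add_zero, sub_zero] at hL
  exact EReal.coe_strictMono.monotone.map_limsup_of_continuousAt _
    continuous_coe_real_ereal.continuousAt
    (isBoundedUnder_of_eventually_le (hL.mono fun _ h => (abs_le.1 h).2))
    (isCoboundedUnder_le_of_eventually_le _ (hL.mono fun _ h => (abs_le.1 h).1))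

theorem limsup_diffQuot_le_clarkeD (hF : LocallyLipschitzAt F xbar) {ι : Type*}
    {l : Filter ι} [l.NeBot] {y w : ι → X} {s : ι → ℝ} {v : X} (hy : Tendsto y l (𝓝 xbar))
    (hs : Tendsto s l (𝓝[>] 0)) (hw : Tendsto w l (𝓝 v)) :
    limsup (fun i => (((F (y i + s i • w i) - F (y i)) / s i : ℝ) : EReal)) l
      ≤ clarkeD F xbar v := by
  have hsplit : (fun i => (((F (y i + s i • w i) - F (y i)) / s i : ℝ) : EReal)) =
      (fun i => (((F (y i + s i • w i) - F (y i + s i • v)) / s i : ℝ) : EReal)) +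
      (fun i => (((F (y i + s i • v) - F (y i)) / s i : ℝ) : EReal)) := by
    funext i
    rw [Pi.add_apply, ← EReal.coe_add, ← add_div, sub_add_sub_cancel]
  have hperturb :
      limsup (fun i => (((F (y i + s i • w i) - F (y i + s i • v)) / s i : ℝ) : EReal)) l = 0 :=
    ((continuous_coe_real_ereal.tendsto 0).comp
      (hF.tendsto_diffQuot_sub_diffQuot hy hs hw)).limsup_eq
  have hdir : limsup (fun i => (((F (y i + s i • v) - F (y i)) / s i : ℝ) : EReal)) l
      ≤ clarkeD F xbar v := by
    rw [hF.coe_clarkeD_eq_limsup v]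
    exact (hy.prodMk hs).limsup_comp_le_limsup
      (u := fun p : X × ℝ => (((F (p.1 + p.2 • v) - F p.1) / p.2 : ℝ) : EReal))
  rw [hsplit]
  refine (EReal.limsup_add_le (by simp [hperturb]) (by simp [hperturb])).trans ?_
  rwa [hperturb, zero_add]

end LocallyLipschitzAt

theorem limsup_second_order_le_general {X : Type*} [NormedAddCommGroup X] [NormedSpace ℝ X]
    (F : X → ℝ) (xbar u v : X)
    (hF : LocallyLipschitzAt F xbar)
    (tseq : ℕ → ℝ) (vseq : ℕ → X)
    (ht_pos : ∀ k, 0 < tseq k) (ht_lim : Tendsto tseq atTop (𝓝 0))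
    (hv_lim : Tendsto vseq atTop (𝓝 v)) :
    Filter.limsup
      (fun k : ℕ =>
        (((F (xbar + tseq k • u + ((tseq k) ^ 2 / 2) • vseq k) - F xbar
            - tseq k * clarkeD F xbar u) / ((tseq k) ^ 2 / 2) : ℝ) : EReal))
      atTop
    ≤ (clarkeD F xbar v : EReal) + clarkeD2 F xbar u := by
  have ht : Tendsto tseq atTop (𝓝[>] 0) :=
    tendsto_nhdsWithin_iff.2 ⟨ht_lim, .of_forall ht_pos⟩
  have hs : Tendsto (fun k => tseq k ^ 2 / 2) atTop (𝓝[>] 0) :=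
    tendsto_nhdsWithin_iff.2 ⟨by simpa using (ht_lim.pow 2).div_const 2,
      .of_forall fun k => div_pos (pow_pos (ht_pos k) 2) two_pos⟩
  have hy : Tendsto (fun k => xbar + tseq k • u) atTop (𝓝 xbar) := by
    simpa using tendsto_const_nhds.add (ht_lim.smul_const u)
  have hsplit : (fun k : ℕ =>
        (((F (xbar + tseq k • u + ((tseq k) ^ 2 / 2) • vseq k) - F xbar
            - tseq k * clarkeD F xbar u) / ((tseq k) ^ 2 / 2) : ℝ) : EReal)) =
      (fun k => (((F (xbar + tseq k • u + (tseq k ^ 2 / 2) • vseq k) - F (xbar + tseq k • u))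
          / (tseq k ^ 2 / 2) : ℝ) : EReal)) +
      (fun t : ℝ => (((F (xbar + t • u) - F xbar - t * clarkeD F xbar u) / (t ^ 2 / 2) : ℝ)
          : EReal)) ∘ tseq := by
    funext k
    rw [Pi.add_apply, Function.comp_apply, ← EReal.coe_add, ← add_div]
    ring_nf
  have hfirst := hF.limsup_diffQuot_le_clarkeD hy hs hv_lim
  have hsecond : limsup (_ ∘ tseq) atTop ≤ clarkeD2 F xbar u := ht.limsup_comp_le_limsup
  rw [hsplit]
  rcases eq_or_ne (clarkeD2 F xbar u) ⊤ with htop | hfin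
  · simp [htop]
  · exact (EReal.limsup_add_le (.inr (hsecond.trans_lt hfin.lt_top).ne)
      (.inl (hfirst.trans_lt (EReal.coe_lt_top _)).ne)).trans (add_le_add hfirst hsecond)

/-- for `F` locally Lipschitz at `xbar`, a positive sequence `tseq → 0` and
`vseq → v`, one has
`limsup_k (F(xbar + tₖ u + ½ tₖ² vₖ) - F xbar - tₖ F°(xbar, u)) / (½ tₖ²) ≤ F°(xbar, v) + F°°(xbar, u)`
in the extended reals. -/
theorem limsup_second_order_le {X : Type*} [NormedAddCommGroup X] [NormedSpace ℝ X]
    [CompleteSpace X] (F : X → ℝ) (xbar u v : X)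
    (hF : LocallyLipschitzAt F xbar)
    (tseq : ℕ → ℝ) (vseq : ℕ → X)
    (ht_pos : ∀ k, 0 < tseq k) (ht_lim : Tendsto tseq atTop (𝓝 0))
    (hv_lim : Tendsto vseq atTop (𝓝 v)) :
    Filter.limsup
      (fun k : ℕ =>
        (((F (xbar + tseq k • u + ((tseq k) ^ 2 / 2) • vseq k) - F xbar
            - tseq k * clarkeD F xbar u) / ((tseq k) ^ 2 / 2) : ℝ) : EReal))
      atTop
    ≤ (clarkeD F xbar v : EReal) + clarkeD2 F xbar u :=
  limsup_second_order_le_general F xbar u v hF tseq vseq ht_pos ht_lim hv_lim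
end

section
/- Let x̄ ∈ Q_0 be a local weak efficient solution of (VP), let u be a critical direction of (VP) at x̄, and suppose the weak Abadie second-order regularity condition (WASRC), i.e., L²(Q; x̄, u) ⊂ T²(Q_0; x̄, u), holds at x̄ for the direction u. Then there is no v ∈ X satisfying f_i°(x̄, v) + f_i°°(x̄, u) < 0 for all i ∈ I(x̄; u) and g_j°(x̄, v) + g_j°°(x̄, u) ≤ 0 for all j ∈ J(x̄; u). -/
open Filter Topology Set

/-- The feasible set `Q₀ = {x : g j x ≤ 0 for all j}`. -/
def Q0set {X : Type*} {m : ℕ} (g : Fin m → X → ℝ) : Set X := {x | ∀ j, g j x ≤ 0}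

/-- `(a, b) ≤_lex (0, 0)` where the second component is an extended real. -/
def lexLe (a : ℝ) (b : EReal) : Prop := a < 0 ∨ (a = 0 ∧ b ≤ 0)

/-- `(a, b) <_lex (0, 0)` where the second component is an extended real. -/
def lexLt (a : ℝ) (b : EReal) : Prop := a < 0 ∨ (a = 0 ∧ b < 0)

/-- The set `L²(Q₀; xbar, u)`. -/
def L2Q0 {X : Type*} [NormedAddCommGroup X] [NormedSpace ℝ X] {m : ℕ}
    (g : Fin m → X → ℝ) (xbar u : X) : Set X :=
  {v | ∀ j, g j xbar = 0 →
    lexLe (clarkeD (g j) xbar u) ((clarkeD (g j) xbar v : EReal) + clarkeD2 (g j) xbar u)}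

/-- The set `L₀²(Q₀; xbar, u)`. -/
def L2Q0strict {X : Type*} [NormedAddCommGroup X] [NormedSpace ℝ X] {m : ℕ}
    (g : Fin m → X → ℝ) (xbar u : X) : Set X :=
  {v | ∀ j, g j xbar = 0 →
    lexLt (clarkeD (g j) xbar u) ((clarkeD (g j) xbar v : EReal) + clarkeD2 (g j) xbar u)}

/-- The set `L²(Q; xbar, u)`, where `Q = Q₀ ∩ {x : f i x ≤ f i xbar}`. -/
def L2Q {X : Type*} [NormedAddCommGroup X] [NormedSpace ℝ X] {p m : ℕ}
    (f : Fin p → X → ℝ) (g : Fin m → X → ℝ) (xbar u : X) : Set X :=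
  {v | (∀ i, lexLe (clarkeD (f i) xbar u)
          ((clarkeD (f i) xbar v : EReal) + clarkeD2 (f i) xbar u)) ∧
       (∀ j, g j xbar = 0 →
          lexLe (clarkeD (g j) xbar u)
            ((clarkeD (g j) xbar v : EReal) + clarkeD2 (g j) xbar u))}

/-- The second-order tangent set `T²(Ω; xbar, u)`. -/
def secondTangentSet {X : Type*} [NormedAddCommGroup X] [NormedSpace ℝ X]
    (Ω : Set X) (xbar u : X) : Set X :=
  {v | ∃ t : ℕ → ℝ, ∃ w : ℕ → X, (∀ k, 0 < t k) ∧ Tendsto t atTop (𝓝 0) ∧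
       Tendsto w atTop (𝓝 v) ∧ ∀ k, xbar + (t k) • u + ((t k) ^ 2 / 2) • w k ∈ Ω}

/-- The (contingent) tangent cone `T(Ω; xbar)`. -/
def tangentCone' {X : Type*} [NormedAddCommGroup X] [NormedSpace ℝ X]
    (Ω : Set X) (xbar : X) : Set X :=
  {d | ∃ t : ℕ → ℝ, ∃ w : ℕ → X, (∀ k, 0 < t k) ∧ Tendsto t atTop (𝓝 0) ∧
       Tendsto w atTop (𝓝 d) ∧ ∀ k, xbar + (t k) • w k ∈ Ω}

/-- The set `A(xbar; u)`. -/
def Aset {X : Type*} [NormedAddCommGroup X] [NormedSpace ℝ X] {m : ℕ}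
    (g : Fin m → X → ℝ) (xbar u : X) : Set X :=
  {v | ∀ j, g j xbar = 0 → clarkeD (g j) xbar u = 0 →
    ∃ δ > 0, ∀ t ∈ Set.Ioo (0:ℝ) δ, g j (xbar + t • u + (t ^ 2 / 2) • v) ≤ 0}

/-- The set `B(xbar; u)`. -/
def Bset {X : Type*} [NormedAddCommGroup X] [NormedSpace ℝ X] {m : ℕ}
    (g : Fin m → X → ℝ) (xbar u : X) : Set X :=
  {v | ∀ j, g j xbar = 0 → clarkeD (g j) xbar u = 0 →
    (clarkeD (g j) xbar v : EReal) + clarkeD2 (g j) xbar u ≤ 0}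

/-- `u` is a critical direction of (VP) at `xbar`. -/
def IsCriticalDir {X : Type*} [NormedAddCommGroup X] [NormedSpace ℝ X] {p m : ℕ}
    (f : Fin p → X → ℝ) (g : Fin m → X → ℝ) (xbar u : X) : Prop :=
  (∀ i, clarkeD (f i) xbar u ≤ 0) ∧ (∃ i, clarkeD (f i) xbar u = 0) ∧
  (∀ j, g j xbar = 0 → clarkeD (g j) xbar u ≤ 0)

/-- `xbar` is a local weak efficient solution of (VP). -/
def LocalWeakEff {X : Type*} [NormedAddCommGroup X] {p m : ℕ}
    (f : Fin p → X → ℝ) (g : Fin m → X → ℝ) (xbar : X) : Prop :=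
  ∃ U ∈ 𝓝 xbar, ∀ x ∈ U, x ∈ Q0set g → ¬ (∀ i, f i x < f i xbar)

/-- `xbar` is a local Geoffrion properly efficient solution of (VP). -/
def LocalGeoffrionEff {X : Type*} [NormedAddCommGroup X] {p m : ℕ}
    (f : Fin p → X → ℝ) (g : Fin m → X → ℝ) (xbar : X) : Prop :=
  ∃ U ∈ 𝓝 xbar,
    (∀ x ∈ U, x ∈ Q0set g → (∀ i, f i x ≤ f i xbar) → (∀ i, f i x = f i xbar)) ∧
    ∃ M > (0:ℝ), ∀ i, ∀ x ∈ U, x ∈ Q0set g → f i x < f i xbar →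
      ∃ j, f j xbar < f j x ∧ (f i xbar - f i x) / (f j x - f j xbar) ≤ M

/-!
By (WASRC) and criticality of `u`, a solution `v` of the system lies in `T²(Q₀; x̄, u)`, so there
are `t_k ↓ 0` and `w_k → v` with `x_k = x̄ + t_k u + ½ t_k² w_k` feasible. Every `f_i` is strictly
smaller at `x_k` than at `x̄` for large `k`, contradicting weak efficiency. If `f_i°(x̄, u) < 0` this
is a first-order effect, since `x_k = x̄ + t_k (u + ½ t_k w_k)`. If `f_i°(x̄, u) = 0`, split
`f_i(x_k) - f_i(x̄)` at the base point `y_k = x̄ + t_k u`: the second-order derivative bounds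
`f_i(y_k) - f_i(x̄)` by `r · ½ t_k²` for any `r > f_i°°(x̄, u)`, and the Clarke derivative at the
moving base points `y_k → x̄` bounds `f_i(x_k) - f_i(y_k)` by `c · ½ t_k²` for any `c > f_i°(x̄, v)`.
Since `f_i°(x̄, v) + f_i°°(x̄, u) < 0`, one can take `c = -r`, and the two bounds cancel.
-/

section Clarke

variable {X : Type*} [NormedAddCommGroup X] {F : X → ℝ} {xbar : X} {ι : Type*} {l : Filter ι}

theorem LocallyLipschitzAt.exists_eventually_abs_sub_le_s10 (hF : LocallyLipschitzAt F xbar) :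
    ∃ L : ℝ, ∀ {a b : ι → X}, Tendsto a l (𝓝 xbar) → Tendsto b l (𝓝 xbar) →
      ∀ᶠ k in l, |F (a k) - F (b k)| ≤ L * ‖a k - b k‖ := by
  obtain ⟨L, -, U, hU, hLip⟩ := hF
  refine ⟨L, fun ha hb => ?_⟩
  filter_upwards [ha.eventually_mem hU, hb.eventually_mem hU] with k hak hbk
  exact hLip _ hak _ hbk

variable [NormedSpace ℝ X]

/-- Without this bound, `clarkeD` (a `limsup` in `ℝ`) would be a junk value and no eventual
estimate could be read off from it. -/
theorem LocallyLipschitzAt.isBoundedUnder_clarke_quotient (hF : LocallyLipschitzAt F xbar)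
    (v : X) :
    IsBoundedUnder (· ≤ ·) (𝓝 xbar ×ˢ 𝓝[>] (0 : ℝ))
      (fun q : X × ℝ => (F (q.1 + q.2 • v) - F q.1) / q.2) := by
  obtain ⟨L, hL⟩ := hF.exists_eventually_abs_sub_le_s10 (l := 𝓝 xbar ×ˢ 𝓝[>] (0 : ℝ))
  have hqv : Tendsto (fun q : X × ℝ => q.1 + q.2 • v) (𝓝 xbar ×ˢ 𝓝[>] (0 : ℝ)) (𝓝 xbar) := by
    simpa using tendsto_fst.add
      ((tendsto_snd.mono_right (nhdsWithin_le_nhds (a := (0 : ℝ)))).smul_const v)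
  refine isBoundedUnder_of_eventually_le (a := L * ‖v‖) ?_
  filter_upwards [hL hqv tendsto_fst, tendsto_snd.eventually self_mem_nhdsWithin]
    with q hLq (hq : 0 < q.2)
  rw [div_le_iff₀ hq]
  calc F (q.1 + q.2 • v) - F q.1 ≤ |F (q.1 + q.2 • v) - F q.1| := le_abs_self _
    _ ≤ L * ‖q.1 + q.2 • v - q.1‖ := hLq
    _ = L * ‖v‖ * q.2 := by
      rw [add_sub_cancel_left, norm_smul, Real.norm_of_nonneg hq.le]; ring

theorem LocallyLipschitzAt.eventually_sub_lt_mul_of_clarkeD_lt (hF : LocallyLipschitzAt F xbar)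
    {y : ι → X} {s : ι → ℝ} {v : X} {c : ℝ} (hy : Tendsto y l (𝓝 xbar))
    (hs : Tendsto s l (𝓝[>] 0)) (hc : clarkeD F xbar v < c) :
    ∀ᶠ k in l, F (y k + s k • v) - F (y k) < c * s k := by
  filter_upwards [(hy.prodMk hs).eventually
      (eventually_lt_of_limsup_lt hc (hF.isBoundedUnder_clarke_quotient v)),
    hs.eventually self_mem_nhdsWithin] with k hk (hsk : 0 < s k)
  exact (div_lt_iff₀ hsk).1 hk

theorem LocallyLipschitzAt.eventually_sub_lt_mul_of_clarkeD_lt_of_tendsto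
    (hF : LocallyLipschitzAt F xbar) {y w : ι → X} {s : ι → ℝ} {v : X} {c : ℝ}
    (hy : Tendsto y l (𝓝 xbar)) (hs : Tendsto s l (𝓝[>] 0)) (hw : Tendsto w l (𝓝 v))
    (hc : clarkeD F xbar v < c) :
    ∀ᶠ k in l, F (y k + s k • w k) - F (y k) < c * s k := by
  obtain ⟨c', hc', hc'c⟩ := exists_between hc
  obtain ⟨L, hL⟩ := hF.exists_eventually_abs_sub_le_s10 (l := l)
  have hs0 : Tendsto s l (𝓝 0) := hs.mono_right nhdsWithin_le_nhds
  have hyw : Tendsto (fun k => y k + s k • w k) l (𝓝 xbar) := by simpa using hy.add (hs0.smul hw)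
  have hyv : Tendsto (fun k => y k + s k • v) l (𝓝 xbar) := by
    simpa using hy.add (hs0.smul_const v)
  have hsmall : ∀ᶠ k in l, L * ‖w k - v‖ < c - c' := by
    have : Tendsto (fun k => L * ‖w k - v‖) l (𝓝 0) := by
      simpa using (tendsto_iff_norm_sub_tendsto_zero.1 hw).const_mul L
    exact this.eventually_lt_const (sub_pos.2 hc'c)
  filter_upwards [hF.eventually_sub_lt_mul_of_clarkeD_lt hy hs hc', hL hyw hyv, hsmall,
    hs.eventually self_mem_nhdsWithin] with k hfix hLk hsk (hspos : 0 < s k)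
  rw [add_sub_add_left_eq_sub, ← smul_sub, norm_smul, Real.norm_of_nonneg hspos.le] at hLk
  nlinarith [le_abs_self (F (y k + s k • w k) - F (y k + s k • v)),
    mul_lt_mul_of_pos_right hsk hspos]

theorem eventually_sub_sub_lt_mul_of_clarkeD2_lt {t : ι → ℝ} {u : X} {r : ℝ}
    (ht : Tendsto t l (𝓝[>] 0)) (hr : clarkeD2 F xbar u < r) :
    ∀ᶠ k in l, F (xbar + t k • u) - F xbar - t k * clarkeD F xbar u < r * (t k ^ 2 / 2) := by
  filter_upwards [ht.eventually (eventually_lt_of_limsup_lt hr),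
    ht.eventually self_mem_nhdsWithin] with k hk (htk : 0 < t k)
  rw [← div_lt_iff₀ (by positivity)]
  exact_mod_cast hk

theorem tendsto_add_smul_add_sq_smul {t : ι → ℝ} {w : ι → X} {u v : X}
    (ht : Tendsto t l (𝓝 0)) (hw : Tendsto w l (𝓝 v)) :
    Tendsto (fun k => xbar + t k • u + (t k ^ 2 / 2) • w k) l (𝓝 xbar) := by
  simpa using (tendsto_const_nhds.add (ht.smul_const u)).add (((ht.pow 2).div_const 2).smul hw)

theorem LocallyLipschitzAt.eventually_lt_of_clarkeD_neg (hF : LocallyLipschitzAt F xbar)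
    {t : ι → ℝ} {w : ι → X} {u v : X} (ht : Tendsto t l (𝓝[>] 0)) (hw : Tendsto w l (𝓝 v))
    (hu : clarkeD F xbar u < 0) :
    ∀ᶠ k in l, F (xbar + t k • u + (t k ^ 2 / 2) • w k) < F xbar := by
  have hdir : Tendsto (fun k => u + (t k / 2) • w k) l (𝓝 u) := by
    simpa using tendsto_const_nhds.add (((ht.mono_right nhdsWithin_le_nhds).div_const 2).smul hw)
  filter_upwards [hF.eventually_sub_lt_mul_of_clarkeD_lt_of_tendsto tendsto_const_nhds ht hdir hu]
    with k hk
  have hcurve : xbar + t k • (u + (t k / 2) • w k) = xbar + t k • u + (t k ^ 2 / 2) • w k := by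
    rw [smul_add, smul_smul, ← add_assoc]; ring_nf
  rw [hcurve, zero_mul] at hk
  linarith

theorem LocallyLipschitzAt.eventually_lt_of_clarkeD_eq_zero (hF : LocallyLipschitzAt F xbar)
    {t : ι → ℝ} {w : ι → X} {u v : X} (ht : Tendsto t l (𝓝[>] 0)) (hw : Tendsto w l (𝓝 v))
    (hu : clarkeD F xbar u = 0) (hv : (clarkeD F xbar v : EReal) + clarkeD2 F xbar u < 0) :
    ∀ᶠ k in l, F (xbar + t k • u + (t k ^ 2 / 2) • w k) < F xbar := by
  have hD2 : clarkeD2 F xbar u < ((-clarkeD F xbar v : ℝ) : EReal) := by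
    rw [EReal.coe_neg, ← zero_sub, EReal.lt_sub_iff_add_lt (.inl (EReal.coe_ne_bot _))
      (.inl (EReal.coe_ne_top _)), add_comm]
    exact hv
  obtain ⟨r, hr, hrv⟩ := EReal.lt_iff_exists_real_btwn.1 hD2
  have hrv : clarkeD F xbar v < -r := by linarith [EReal.coe_lt_coe_iff.1 hrv]
  have ht0 : Tendsto t l (𝓝 0) := ht.mono_right nhdsWithin_le_nhds
  have hs : Tendsto (fun k => t k ^ 2 / 2) l (𝓝[>] 0) := by
    refine tendsto_nhdsWithin_iff.2 ⟨by simpa using (ht0.pow 2).div_const 2, ?_⟩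
    filter_upwards [ht.eventually self_mem_nhdsWithin] with k (htk : 0 < t k)
    exact show 0 < t k ^ 2 / 2 by positivity
  have hy : Tendsto (fun k => xbar + t k • u) l (𝓝 xbar) := by
    simpa using tendsto_const_nhds.add (ht0.smul_const u)
  filter_upwards [hF.eventually_sub_lt_mul_of_clarkeD_lt_of_tendsto hy hs hw hrv,
    eventually_sub_sub_lt_mul_of_clarkeD2_lt ht hr] with k hmove hbase
  rw [hu, mul_zero, sub_zero] at hbase
  linarith

theorem LocallyLipschitzAt.eventually_lt_of_clarkeD_nonpos (hF : LocallyLipschitzAt F xbar)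
    {t : ι → ℝ} {w : ι → X} {u v : X} (ht : Tendsto t l (𝓝[>] 0)) (hw : Tendsto w l (𝓝 v))
    (hu : clarkeD F xbar u ≤ 0)
    (hv : clarkeD F xbar u = 0 → (clarkeD F xbar v : EReal) + clarkeD2 F xbar u < 0) :
    ∀ᶠ k in l, F (xbar + t k • u + (t k ^ 2 / 2) • w k) < F xbar :=
  hu.lt_or_eq.elim (hF.eventually_lt_of_clarkeD_neg ht hw)
    fun h0 => hF.eventually_lt_of_clarkeD_eq_zero ht hw h0 (hv h0)

end Clarke

theorem lexLe_of_nonpos {a : ℝ} {b : EReal} (ha : a ≤ 0) (hb : a = 0 → b ≤ 0) : lexLe a b :=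
  ha.lt_or_eq.imp id fun h => ⟨h, hb h⟩

theorem mem_L2Q_of_isCriticalDir {X : Type*} [NormedAddCommGroup X] [NormedSpace ℝ X] {p m : ℕ}
    {f : Fin p → X → ℝ} {g : Fin m → X → ℝ} {xbar u v : X} (hu : IsCriticalDir f g xbar u)
    (hvf : ∀ i, clarkeD (f i) xbar u = 0 →
      (clarkeD (f i) xbar v : EReal) + clarkeD2 (f i) xbar u ≤ 0)
    (hvg : ∀ j, g j xbar = 0 → clarkeD (g j) xbar u = 0 →
      (clarkeD (g j) xbar v : EReal) + clarkeD2 (g j) xbar u ≤ 0) :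
    v ∈ L2Q f g xbar u :=
  ⟨fun i => lexLe_of_nonpos (hu.1 i) (hvf i),
    fun j hj => lexLe_of_nonpos (hu.2.2 j hj) (hvg j hj)⟩

theorem second_order_primal_kkt_weak_fixed_dir_general
    {X : Type*} [NormedAddCommGroup X] [NormedSpace ℝ X]
    {p m : ℕ} (f : Fin p → X → ℝ) (g : Fin m → X → ℝ) (xbar : X)
    (hf : ∀ i, LocallyLipschitzAt (f i) xbar)
    (hweak : LocalWeakEff f g xbar)
    (u : X) (hu : IsCriticalDir f g xbar u)
    (hWASRC : L2Q f g xbar u ⊆ secondTangentSet (Q0set g) xbar u) :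
    ¬ ∃ v : X,
      (∀ i, clarkeD (f i) xbar u = 0 →
        (clarkeD (f i) xbar v : EReal) + clarkeD2 (f i) xbar u < 0) ∧
      (∀ j, g j xbar = 0 → clarkeD (g j) xbar u = 0 →
        (clarkeD (g j) xbar v : EReal) + clarkeD2 (g j) xbar u ≤ 0) := by
  rintro ⟨v, hvf, hvg⟩
  obtain ⟨t, w, ht0, ht, hw, hfeas⟩ :=
    hWASRC (mem_L2Q_of_isCriticalDir hu (fun i h => (hvf i h).le) hvg)
  obtain ⟨U, hU, hUeff⟩ := hweak
  have ht' : Tendsto t atTop (𝓝[>] 0) := tendsto_nhdsWithin_iff.2 ⟨ht, .of_forall ht0⟩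
  have hdesc : ∀ᶠ k in atTop, ∀ i, f i (xbar + t k • u + (t k ^ 2 / 2) • w k) < f i xbar :=
    eventually_all.2 fun i => (hf i).eventually_lt_of_clarkeD_nonpos ht' hw (hu.1 i) (hvf i)
  have hnear := (tendsto_add_smul_add_sq_smul (xbar := xbar) (u := u) ht hw).eventually_mem hU
  obtain ⟨k, hk, hkU⟩ := (hdesc.and hnear).exists
  exact hUeff _ hkU (hfeas k) hk

/-- Corollary 4.1: if `xbar` is a local weak efficient solution of (VP),
`u` is a critical direction and (WASRC) holds at `xbar` for `u`, then the system
`f_i°(xbar,v) + f_i°°(xbar,u) < 0 (i ∈ I(xbar;u))`,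
`g_j°(xbar,v) + g_j°°(xbar,u) ≤ 0 (j ∈ J(xbar;u))` has no solution `v`. -/
theorem second_order_primal_kkt_weak_fixed_dir
    {X : Type*} [NormedAddCommGroup X] [NormedSpace ℝ X] [CompleteSpace X]
    {p m : ℕ} (f : Fin p → X → ℝ) (g : Fin m → X → ℝ) (xbar : X)
    (hx : xbar ∈ Q0set g)
    (hf : ∀ i, LocallyLipschitzAt (f i) xbar)
    (hg : ∀ j, g j xbar = 0 → LocallyLipschitzAt (g j) xbar)
    (hgc : ∀ j, g j xbar ≠ 0 → ContinuousAt (g j) xbar)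
    (hweak : LocalWeakEff f g xbar)
    (u : X) (hu : IsCriticalDir f g xbar u)
    (hWASRC : L2Q f g xbar u ⊆ secondTangentSet (Q0set g) xbar u) :
    ¬ ∃ v : X,
      (∀ i, clarkeD (f i) xbar u = 0 →
        (clarkeD (f i) xbar v : EReal) + clarkeD2 (f i) xbar u < 0) ∧
      (∀ j, g j xbar = 0 → clarkeD (g j) xbar u = 0 →
        (clarkeD (g j) xbar v : EReal) + clarkeD2 (g j) xbar u ≤ 0) :=
  second_order_primal_kkt_weak_fixed_dir_general f g xbar hf hweak u hu hWASRC
end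

section
/- Let x̄ ∈ Q_0 be a local Geoffrion properly efficient solution of (VP) and suppose the weak Abadie second-order regularity condition (WASRC), i.e., L²(Q; x̄, u) ⊂ T²(Q_0; x̄, u), holds at x̄ for every critical direction u. Then there is no pair (u, v) ∈ X × X satisfying: F²_i(x̄; u, v) ≤_lex (0, 0) for all i ∈ I, F²_i(x̄; u, v) <_lex (0, 0) for at least one i ∈ I(x̄; u), and G²_j(x̄; u, v) ≤_lex (0, 0) for all j ∈ J(x̄). -/
open Filter Topology Set

/-!
Along a second-order tangent curve `x k = xbar + t k • u + (t k ^ 2 / 2) • w k` to `Q₀`, which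
exists by (WASRC), the Clarke derivatives control the objectives to second order: the objective
`f i₀` with `F²_{i₀} <_lex (0,0)` drops by at least `|c| t k ^ 2 / 2` for some `c < 0`, while
every other objective rises by at most `ε t k ^ 2 / 2` for any `ε > 0`. Taking `ε = |c| / M`
contradicts the Geoffrion bound `M` on the trade-off ratios.
-/

universe v

theorem lexLe.fst_nonpos {a : ℝ} {b : EReal} (h : lexLe a b) : a ≤ 0 :=
  h.elim le_of_lt fun h => h.1.le

theorem lexLt.snd_neg {a : ℝ} {b : EReal} (h : lexLt a b) (ha : a = 0) : b < 0 :=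
  h.elim (fun h => (h.ne ha).elim) And.right

section Curve

variable {ι X : Type*} [NormedAddCommGroup X] [NormedSpace ℝ X] {l : Filter ι}

theorem Filter.Tendsto.sq_div_two_nhdsGT {t : ι → ℝ} (ht : Tendsto t l (𝓝[>] 0)) :
    Tendsto (fun i => t i ^ 2 / 2) l (𝓝[>] 0) :=
  tendsto_nhdsWithin_iff.2
    ⟨by simpa using ((tendsto_nhds_of_tendsto_nhdsWithin ht).pow 2).div_const 2,
      (ht.eventually self_mem_nhdsWithin).mono fun i hi => by
        have : 0 < t i := hi
        exact Set.mem_Ioi.2 (by positivity)⟩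

theorem tendsto_add_smul_add_smul {xbar u v : X} {t : ι → ℝ} {w : ι → X}
    (ht : Tendsto t l (𝓝 0)) (hw : Tendsto w l (𝓝 v)) :
    Tendsto (fun i => xbar + t i • u + (t i ^ 2 / 2) • w i) l (𝓝 xbar) := by
  simpa using (tendsto_const_nhds.add (ht.smul_const u)).add (((ht.pow 2).div_const 2).smul hw)

theorem eventually_sub_lt_of_clarkeD2_lt {F : X → ℝ} {xbar u : X} {b : ℝ}
    (hb : clarkeD2 F xbar u < b) {s : ι → ℝ} (hs : Tendsto s l (𝓝[>] 0)) :
    ∀ᶠ i in l, F (xbar + s i • u) - F xbar - s i * clarkeD F xbar u < b * (s i ^ 2 / 2) := by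
  filter_upwards [hs.eventually (eventually_lt_of_limsup_lt hb),
    hs.eventually self_mem_nhdsWithin] with i hi (hsi : 0 < s i)
  exact (div_lt_iff₀ (by positivity)).1 (EReal.coe_lt_coe_iff.1 hi)

end Curve

namespace LocallyLipschitzAt

variable {X : Type*} [NormedAddCommGroup X] {F : X → ℝ} {xbar : X}

theorem exists_eventually_sub_le (hF : LocallyLipschitzAt F xbar) :
    ∃ L : ℝ, ∀ {ι : Type v} {l : Filter ι} {a b : ι → X},
      Tendsto a l (𝓝 xbar) → Tendsto b l (𝓝 xbar) →
        ∀ᶠ i in l, F (a i) - F (b i) ≤ L * ‖a i - b i‖ := by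
  obtain ⟨L, -, U, hU, hLip⟩ := hF
  exact ⟨L, fun ha hb => (ha.eventually_mem hU).mp <| (hb.eventually_mem hU).mono
    fun i hb ha => (abs_le.1 (hLip _ ha _ hb)).2⟩

variable [NormedSpace ℝ X]

theorem isBoundedUnder_clarke_quotient_s11 (hF : LocallyLipschitzAt F xbar) (v : X) :
    IsBoundedUnder (· ≤ ·) ((𝓝 xbar) ×ˢ (𝓝[>] (0:ℝ)))
      (fun q : X × ℝ => (F (q.1 + q.2 • v) - F q.1) / q.2) := by
  obtain ⟨L, hL⟩ := hF.exists_eventually_sub_le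
  have hsnd : Tendsto Prod.snd ((𝓝 xbar) ×ˢ (𝓝[>] (0:ℝ))) (𝓝[>] 0) := tendsto_snd
  have hmove : Tendsto (fun q : X × ℝ => q.1 + q.2 • v) ((𝓝 xbar) ×ˢ (𝓝[>] (0:ℝ))) (𝓝 xbar) := by
    simpa using tendsto_fst.add ((tendsto_nhds_of_tendsto_nhdsWithin hsnd).smul_const v)
  refine ⟨L * ‖v‖, eventually_map.2 ?_⟩
  filter_upwards [hL hmove tendsto_fst, hsnd.eventually self_mem_nhdsWithin]
    with q hq (hq0 : 0 < q.2)
  rw [add_sub_cancel_left, norm_smul, Real.norm_of_nonneg hq0.le] at hq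
  rw [div_le_iff₀ hq0]
  linarith

variable {ι : Type*} {l : Filter ι} {u v : X} {t : ι → ℝ} {w : ι → X}

/-- Lipschitz continuity absorbs the perturbation `w i - v` of the direction. -/
theorem eventually_sub_lt_of_clarkeD_lt (hF : LocallyLipschitzAt F xbar) {c : ℝ}
    (hc : clarkeD F xbar v < c) {y : ι → X} {s : ι → ℝ} (hy : Tendsto y l (𝓝 xbar))
    (hs : Tendsto s l (𝓝[>] 0)) (hw : Tendsto w l (𝓝 v)) :
    ∀ᶠ i in l, F (y i + s i • w i) - F (y i) < c * s i := by
  obtain ⟨c', hvc', hc'c⟩ := exists_between hc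
  obtain ⟨L, hL⟩ := hF.exists_eventually_sub_le
  have hs0 : Tendsto s l (𝓝 0) := tendsto_nhds_of_tendsto_nhdsWithin hs
  have hquot : ∀ᶠ i in l, (F (y i + s i • v) - F (y i)) / s i < c' :=
    (hy.prodMk hs).eventually
      (eventually_lt_of_limsup_lt hvc' (hF.isBoundedUnder_clarke_quotient_s11 v))
  have hlip : ∀ᶠ i in l,
      F (y i + s i • w i) - F (y i + s i • v) ≤ L * ‖y i + s i • w i - (y i + s i • v)‖ :=
    hL (a := fun i => y i + s i • w i) (b := fun i => y i + s i • v)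
      (by simpa using hy.add (hs0.smul hw)) (by simpa using hy.add (hs0.smul_const v))
  have hLw : Tendsto (fun i => L * ‖w i - v‖) l (𝓝 0) := by
    simpa using (hw.sub_const v).norm.const_mul L
  filter_upwards [hquot, hlip, hLw.eventually (gt_mem_nhds (sub_pos.2 hc'c)),
    hs.eventually self_mem_nhdsWithin] with i hquot hlip hdir (hsi : 0 < s i)
  rw [add_sub_add_left_eq_sub, ← smul_sub, norm_smul, Real.norm_of_nonneg hsi.le] at hlip
  rw [div_lt_iff₀ hsi] at hquot
  nlinarith

theorem eventually_lt_of_clarkeD_neg_s11 (hF : LocallyLipschitzAt F xbar)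
    (hu : clarkeD F xbar u < 0) (ht : Tendsto t l (𝓝[>] 0)) (hw : Tendsto w l (𝓝 v)) :
    ∀ᶠ i in l, F (xbar + t i • u + (t i ^ 2 / 2) • w i) < F xbar := by
  have hdir : Tendsto (fun i => u + (t i / 2) • w i) l (𝓝 u) := by
    simpa using tendsto_const_nhds.add
      (((tendsto_nhds_of_tendsto_nhdsWithin ht).div_const 2).smul hw)
  filter_upwards [hF.eventually_sub_lt_of_clarkeD_lt hu tendsto_const_nhds ht hdir] with i hi
  have hcurve : xbar + t i • u + (t i ^ 2 / 2) • w i = xbar + t i • (u + (t i / 2) • w i) := by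
    rw [smul_add, smul_smul, add_assoc]
    ring_nf
  rw [hcurve]
  linarith

theorem eventually_sub_lt_of_clarkeD_add_clarkeD2_lt (hF : LocallyLipschitzAt F xbar)
    (hu : clarkeD F xbar u = 0) {c : ℝ}
    (hc : (clarkeD F xbar v : EReal) + clarkeD2 F xbar u < c)
    (ht : Tendsto t l (𝓝[>] 0)) (hw : Tendsto w l (𝓝 v)) :
    ∀ᶠ i in l, F (xbar + t i • u + (t i ^ 2 / 2) • w i) - F xbar < c * (t i ^ 2 / 2) := by
  have hc' : clarkeD2 F xbar u < ((c - clarkeD F xbar v : ℝ) : EReal) := by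
    rw [EReal.coe_sub, EReal.lt_sub_iff_add_lt (.inl (EReal.coe_ne_bot _))
      (.inl (EReal.coe_ne_top _)), add_comm]
    exact hc
  obtain ⟨b, hb, hbc⟩ := EReal.exists_between_coe_real hc'
  have hvb : clarkeD F xbar v < c - b := by
    have := EReal.coe_lt_coe_iff.1 hbc
    linarith
  have hy : Tendsto (fun i => xbar + t i • u) l (𝓝 xbar) := by
    simpa using tendsto_const_nhds.add ((tendsto_nhds_of_tendsto_nhdsWithin ht).smul_const u)
  filter_upwards [hF.eventually_sub_lt_of_clarkeD_lt hvb hy ht.sq_div_two_nhdsGT hw,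
    eventually_sub_lt_of_clarkeD2_lt hb ht] with i hv hu'
  rw [hu, mul_zero, sub_zero] at hu'
  linarith

theorem eventually_sub_lt_of_lexLe (hF : LocallyLipschitzAt F xbar)
    (h : lexLe (clarkeD F xbar u) ((clarkeD F xbar v : EReal) + clarkeD2 F xbar u))
    {ε : ℝ} (hε : 0 < ε) (ht : Tendsto t l (𝓝[>] 0)) (hw : Tendsto w l (𝓝 v)) :
    ∀ᶠ i in l, F (xbar + t i • u + (t i ^ 2 / 2) • w i) - F xbar < ε * (t i ^ 2 / 2) := by
  rcases h with hneg | ⟨hzero, hle⟩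
  · filter_upwards [hF.eventually_lt_of_clarkeD_neg_s11 hneg ht hw,
      ht.eventually self_mem_nhdsWithin] with i hi (hti : 0 < t i)
    have : 0 < ε * (t i ^ 2 / 2) := by positivity
    linarith
  · exact hF.eventually_sub_lt_of_clarkeD_add_clarkeD2_lt hzero
      (hle.trans_lt (EReal.coe_pos.2 hε)) ht hw

end LocallyLipschitzAt

theorem LocalGeoffrionEff.false_of_unbounded_tradeoff {X ι : Type*} [NormedAddCommGroup X]
    {p m : ℕ} {f : Fin p → X → ℝ} {g : Fin m → X → ℝ} {xbar : X}
    (hgeo : LocalGeoffrionEff f g xbar) {l : Filter ι} [l.NeBot] {x : ι → X} {s : ι → ℝ}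
    (hx : Tendsto x l (𝓝 xbar)) (hQ : ∀ᶠ k in l, x k ∈ Q0set g) (hs : ∀ᶠ k in l, 0 < s k)
    {i₀ : Fin p} {c : ℝ} (hc : c < 0) (hdec : ∀ᶠ k in l, f i₀ (x k) - f i₀ xbar < c * s k)
    (hsmall : ∀ ε > 0, ∀ᶠ k in l, ∀ j, f j (x k) - f j xbar < ε * s k) : False := by
  obtain ⟨U, hU, -, M, hM, hratio⟩ := hgeo
  obtain ⟨k, hxU, hxQ, hsk, hdeck, hsmallk⟩ := (hx.eventually_mem hU |>.and <| hQ.and <|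
    hs.and <| hdec.and <| hsmall (-c / M) (div_pos (neg_pos.2 hc) hM)).exists
  obtain ⟨j, hj, hjM⟩ := hratio i₀ (x k) hxU hxQ (by nlinarith)
  rw [div_le_iff₀ (sub_pos.2 hj)] at hjM
  have hMc : M * (-c / M * s k) = -c * s k := by field_simp
  nlinarith [hsmallk j]

theorem strong_second_order_primal_kkt_general
    {X : Type*} [NormedAddCommGroup X] [NormedSpace ℝ X]
    {p m : ℕ} (f : Fin p → X → ℝ) (g : Fin m → X → ℝ) (xbar : X)
    (hf : ∀ i, LocallyLipschitzAt (f i) xbar)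
    (hgeo : LocalGeoffrionEff f g xbar)
    (hWASRC : ∀ u : X, IsCriticalDir f g xbar u →
      L2Q f g xbar u ⊆ secondTangentSet (Q0set g) xbar u) :
    ¬ ∃ u v : X,
      (∀ i, lexLe (clarkeD (f i) xbar u)
        ((clarkeD (f i) xbar v : EReal) + clarkeD2 (f i) xbar u)) ∧
      (∃ i, clarkeD (f i) xbar u = 0 ∧
        lexLt (clarkeD (f i) xbar u)
          ((clarkeD (f i) xbar v : EReal) + clarkeD2 (f i) xbar u)) ∧
      (∀ j, g j xbar = 0 → lexLe (clarkeD (g j) xbar u)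
        ((clarkeD (g j) xbar v : EReal) + clarkeD2 (g j) xbar u)) := by
  rintro ⟨u, v, hf_le, ⟨i₀, hu₀, hi₀⟩, hg_le⟩
  have hcrit : IsCriticalDir f g xbar u :=
    ⟨fun i => (hf_le i).fst_nonpos, ⟨i₀, hu₀⟩, fun j hj => (hg_le j hj).fst_nonpos⟩
  obtain ⟨t, w, htpos, ht0, hw, hQ⟩ := hWASRC u hcrit ⟨hf_le, hg_le⟩
  have ht : Tendsto t atTop (𝓝[>] 0) := tendsto_nhdsWithin_iff.2 ⟨ht0, .of_forall htpos⟩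
  obtain ⟨c, hdec, hc⟩ := EReal.exists_between_coe_real (hi₀.snd_neg hu₀)
  exact hgeo.false_of_unbounded_tradeoff (tendsto_add_smul_add_smul ht0 hw) (.of_forall hQ)
    (.of_forall fun k => by have := htpos k; positivity) (EReal.coe_neg'.1 hc)
    ((hf i₀).eventually_sub_lt_of_clarkeD_add_clarkeD2_lt hu₀ hdec ht hw)
    fun ε hε => eventually_all.2 fun j => (hf j).eventually_sub_lt_of_lexLe (hf_le j) hε ht hw

/-- Theorem 5.1: if `xbar` is a local Geoffrion properly efficient solution
of (VP) and (WASRC) holds at `xbar` for every critical direction, then the system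
`F²_i(xbar; u, v) ≤_lex (0,0) (i ∈ I)`, `F²_i(xbar; u, v) <_lex (0,0)` for at least one
`i ∈ I(xbar; u)`, `G²_j(xbar; u, v) ≤_lex (0,0) (j ∈ J(xbar))` has no solution `(u, v)`. -/
theorem strong_second_order_primal_kkt
    {X : Type*} [NormedAddCommGroup X] [NormedSpace ℝ X] [CompleteSpace X]
    {p m : ℕ} (f : Fin p → X → ℝ) (g : Fin m → X → ℝ) (xbar : X)
    (hx : xbar ∈ Q0set g)
    (hf : ∀ i, LocallyLipschitzAt (f i) xbar)
    (hg : ∀ j, g j xbar = 0 → LocallyLipschitzAt (g j) xbar)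
    (hgc : ∀ j, g j xbar ≠ 0 → ContinuousAt (g j) xbar)
    (hgeo : LocalGeoffrionEff f g xbar)
    (hWASRC : ∀ u : X, IsCriticalDir f g xbar u →
      L2Q f g xbar u ⊆ secondTangentSet (Q0set g) xbar u) :
    ¬ ∃ u v : X,
      (∀ i, lexLe (clarkeD (f i) xbar u)
        ((clarkeD (f i) xbar v : EReal) + clarkeD2 (f i) xbar u)) ∧
      (∃ i, clarkeD (f i) xbar u = 0 ∧
        lexLt (clarkeD (f i) xbar u)
          ((clarkeD (f i) xbar v : EReal) + clarkeD2 (f i) xbar u)) ∧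
      (∀ j, g j xbar = 0 → lexLe (clarkeD (g j) xbar u)
        ((clarkeD (g j) xbar v : EReal) + clarkeD2 (g j) xbar u)) :=
  strong_second_order_primal_kkt_general f g xbar hf hgeo hWASRC
end

section
/- Let x̄ ∈ Q_0 be a local Geoffrion properly efficient solution of (VP) and suppose the weak Abadie regularity condition (WARC) holds at x̄, i.e., L(Q; x̄) := L²(Q; x̄, 0) ⊂ T(Q_0; x̄). Then there is no u ∈ X satisfying: f_i°(x̄, u) ≤ 0 for all i ∈ I, f_i°(x̄, u) < 0 for at least one i ∈ I, and g_j°(x̄, u) ≤ 0 for all j ∈ J(x̄). -/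
open Filter Topology Set

/-
Along a tangent direction `d` of `Q₀` realised by `xbar + tₖ • wₖ ∈ Q₀`, the Clarke derivative
bounds every difference quotient from above: `(fᵢ(xbar + tₖ • wₖ) - fᵢ(xbar)) / tₖ < fᵢ°(xbar, d) + ε`
for large `k`. If all `fᵢ°(xbar, d) ≤ 0` and `f_{i₀}°(xbar, d) = -(M + 1) ε < 0`, then `f_{i₀}` decreases
by more than `M ε tₖ` while every other objective increases by less than `ε tₖ`, so all the trade-off
ratios at the feasible point `xbar + tₖ • wₖ` exceed the Geoffrion constant `M`. Under (WARC), a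
solution `u` of the system lies in `L(Q; xbar)` and hence is such a tangent direction.
-/

section Clarke

variable {X : Type*} [NormedAddCommGroup X] [NormedSpace ℝ X] {F : X → ℝ} {xbar : X}

theorem tendsto_add_smul_nhds_prod_nhdsGT (xbar u : X) :
    Tendsto (fun p : X × ℝ => p.1 + p.2 • u) (𝓝 xbar ×ˢ 𝓝[>] 0) (𝓝 xbar) := by
  have hcont : Continuous fun p : X × ℝ => p.1 + p.2 • u := by fun_prop
  have h := hcont.tendsto (xbar, 0)
  rw [nhds_prod_eq] at h
  simpa using h.mono_left (prod_mono le_rfl nhdsWithin_le_nhds)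

theorem tendsto_add_smul_of_tendsto_zero {ι : Type*} {l : Filter ι} {t : ι → ℝ} {w : ι → X}
    {u : X} (xbar : X) (ht : Tendsto t l (𝓝 0)) (hw : Tendsto w l (𝓝 u)) :
    Tendsto (fun k => xbar + t k • w k) l (𝓝 xbar) := by
  simpa using tendsto_const_nhds.add (ht.smul hw)

theorem LocallyLipschitzAt.isBoundedUnder_clarke (hF : LocallyLipschitzAt F xbar) (u : X) :
    IsBoundedUnder (· ≤ ·) (𝓝 xbar ×ˢ 𝓝[>] 0)
      (fun p : X × ℝ => (F (p.1 + p.2 • u) - F p.1) / p.2) := by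
  obtain ⟨L, -, U, hU, hLip⟩ := hF
  refine ⟨L * ‖u‖, eventually_map.2 ?_⟩
  filter_upwards [(tendsto_add_smul_nhds_prod_nhdsGT xbar u).eventually_mem hU,
    prod_mem_prod hU self_mem_nhdsWithin] with p hpu ⟨hp, ht⟩
  have h := (le_abs_self _).trans (hLip _ hpu _ hp)
  rw [add_sub_cancel_left, norm_smul, Real.norm_of_nonneg (le_of_lt ht)] at h
  rw [div_le_iff₀ ht]
  linarith

theorem LocallyLipschitzAt.eventually_lt_clarkeD_add (hF : LocallyLipschitzAt F xbar) (u : X)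
    {ε : ℝ} (hε : 0 < ε) :
    ∀ᶠ p in 𝓝 xbar ×ˢ 𝓝[>] 0, (F (p.1 + p.2 • u) - F p.1) / p.2 < clarkeD F xbar u + ε :=
  eventually_lt_of_limsup_lt (lt_add_of_pos_right _ hε) (hF.isBoundedUnder_clarke u)

theorem LocallyLipschitzAt.eventually_slope_lt_clarkeD_add (hF : LocallyLipschitzAt F xbar)
    {t : ℕ → ℝ} {w : ℕ → X} {u : X} (ht : ∀ k, 0 < t k) (ht0 : Tendsto t atTop (𝓝 0))
    (hw : Tendsto w atTop (𝓝 u)) {ε : ℝ} (hε : 0 < ε) :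
    ∀ᶠ k in atTop, (F (xbar + t k • w k) - F xbar) / t k < clarkeD F xbar u + ε := by
  have hbase : Tendsto (fun k => (xbar, t k)) atTop (𝓝 xbar ×ˢ 𝓝[>] 0) :=
    tendsto_const_nhds.prodMk (tendsto_nhdsWithin_iff.2 ⟨ht0, Eventually.of_forall ht⟩)
  have hquot := hbase.eventually (hF.eventually_lt_clarkeD_add u (half_pos hε))
  obtain ⟨L, -, U, hU, hLip⟩ := hF
  have hsmall : ∀ᶠ k in atTop, L * ‖w k - u‖ < ε / 2 := by
    have h := (tendsto_iff_norm_sub_tendsto_zero.1 hw).const_mul L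
    rw [mul_zero] at h
    exact h.eventually_lt_const (half_pos hε)
  filter_upwards [hquot, hsmall,
    (tendsto_add_smul_of_tendsto_zero xbar ht0 tendsto_const_nhds).eventually_mem hU,
    (tendsto_add_smul_of_tendsto_zero xbar ht0 hw).eventually_mem hU] with k hk hks hku hkw
  have hlip := (le_abs_self _).trans (hLip _ hkw _ hku)
  rw [add_sub_add_left_eq_sub, ← smul_sub, norm_smul, Real.norm_of_nonneg (ht k).le] at hlip
  have hks' := mul_lt_mul_of_pos_right hks (ht k)
  rw [div_lt_iff₀ (ht k)] at hk ⊢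
  linarith

@[simp]
theorem clarkeD_zero_right (F : X → ℝ) (xbar : X) : clarkeD F xbar 0 = 0 := by
  simp [clarkeD]

@[simp]
theorem clarkeD2_zero_right (F : X → ℝ) (xbar : X) : clarkeD2 F xbar 0 = 0 := by
  simp [clarkeD2]

end Clarke

section VectorOptimization

variable {X : Type*} [NormedAddCommGroup X] [NormedSpace ℝ X] {p m : ℕ}
  {f : Fin p → X → ℝ} {g : Fin m → X → ℝ} {xbar : X}

theorem mem_L2Q_zero_iff {v : X} :
    v ∈ L2Q f g xbar 0 ↔
      (∀ i, clarkeD (f i) xbar v ≤ 0) ∧ ∀ j, g j xbar = 0 → clarkeD (g j) xbar v ≤ 0 := by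
  simp [L2Q, lexLe]

theorem LocalGeoffrionEff.not_exists_clarkeD_neg (hgeo : LocalGeoffrionEff f g xbar)
    (hf : ∀ i, LocallyLipschitzAt (f i) xbar) {d : X} (hd : d ∈ tangentCone' (Q0set g) xbar)
    (hle : ∀ i, clarkeD (f i) xbar d ≤ 0) : ¬ ∃ i, clarkeD (f i) xbar d < 0 := by
  rintro ⟨i₀, hi₀⟩
  obtain ⟨t, w, ht, ht0, hw, hQ⟩ := hd
  obtain ⟨U, hU, -, M, hM, hproper⟩ := hgeo
  set ε := -clarkeD (f i₀) xbar d / (M + 1) with hε_def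
  have hε : 0 < ε := div_pos (neg_pos.2 hi₀) (by linarith)
  have hcε : clarkeD (f i₀) xbar d = -(M + 1) * ε := by
    rw [hε_def]; field_simp
  obtain ⟨k, hkU, hslope⟩ := ((tendsto_add_smul_of_tendsto_zero xbar ht0 hw).eventually_mem hU
    |>.and (eventually_all.2 fun i => (hf i).eventually_slope_lt_clarkeD_add ht ht0 hw hε)).exists
  set x := xbar + t k • w k
  have hslope' : ∀ i, f i x - f i xbar < (clarkeD (f i) xbar d + ε) * t k :=
    fun i => (div_lt_iff₀ (ht k)).1 (hslope i)
  have hdecrease : M * ε * t k < f i₀ xbar - f i₀ x := by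
    have := hslope' i₀
    rw [hcε] at this
    linarith
  have hMεt : 0 < M * ε * t k := by have := ht k; positivity
  obtain ⟨j, hj, hratio⟩ := hproper i₀ x hkU (hQ k) (by linarith)
  have htradeoff : f i₀ xbar - f i₀ x ≤ M * (f j x - f j xbar) :=
    (div_le_iff₀ (sub_pos.2 hj)).1 hratio
  have hincrease : M * (f j x - f j xbar) < M * (ε * t k) := by
    refine mul_lt_mul_of_pos_left ?_ hM
    nlinarith [hslope' j, hle j, ht k]
  linarith

end VectorOptimization

theorem strong_first_order_primal_kkt_general
    {X : Type*} [NormedAddCommGroup X] [NormedSpace ℝ X]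
    {p m : ℕ} (f : Fin p → X → ℝ) (g : Fin m → X → ℝ) (xbar : X)
    (hf : ∀ i, LocallyLipschitzAt (f i) xbar)
    (hgeo : LocalGeoffrionEff f g xbar)
    (hWARC : L2Q f g xbar 0 ⊆ tangentCone' (Q0set g) xbar) :
    ¬ ∃ u : X,
      (∀ i, clarkeD (f i) xbar u ≤ 0) ∧
      (∃ i, clarkeD (f i) xbar u < 0) ∧
      (∀ j, g j xbar = 0 → clarkeD (g j) xbar u ≤ 0) := by
  rintro ⟨u, hfu, hneg, hgu⟩
  exact hgeo.not_exists_clarkeD_neg hf (hWARC (mem_L2Q_zero_iff.2 ⟨hfu, hgu⟩)) hfu hneg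

/-- Corollary 5.2: if `xbar` is a local Geoffrion properly efficient solution
of (VP) and (WARC) holds at `xbar`, then the system `f_i°(xbar,u) ≤ 0 (i ∈ I)`, with strict
inequality for at least one `i`, and `g_j°(xbar,u) ≤ 0 (j ∈ J(xbar))`, has no solution. -/
theorem strong_first_order_primal_kkt
    {X : Type*} [NormedAddCommGroup X] [NormedSpace ℝ X] [CompleteSpace X]
    {p m : ℕ} (f : Fin p → X → ℝ) (g : Fin m → X → ℝ) (xbar : X)
    (hx : xbar ∈ Q0set g)
    (hf : ∀ i, LocallyLipschitzAt (f i) xbar)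
    (hg : ∀ j, g j xbar = 0 → LocallyLipschitzAt (g j) xbar)
    (hgc : ∀ j, g j xbar ≠ 0 → ContinuousAt (g j) xbar)
    (hgeo : LocalGeoffrionEff f g xbar)
    (hWARC : L2Q f g xbar 0 ⊆ tangentCone' (Q0set g) xbar) :
    ¬ ∃ u : X,
      (∀ i, clarkeD (f i) xbar u ≤ 0) ∧
      (∃ i, clarkeD (f i) xbar u < 0) ∧
      (∀ j, g j xbar = 0 → clarkeD (g j) xbar u ≤ 0) :=
  strong_first_order_primal_kkt_general f g xbar hf hgeo hWARC
end
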